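/- For the sine-wave reference CRN, the differences a = x_{A+} − x_{A−} and ρ = x_{R+} − x_{R−} satisfy the harmonic oscillator system ∂t ρ = k·a, ∂t a = −k·ρ; hence x_{R+}(t) − x_{R−}(t) = ρ(0)·cos(kt) + a(0)·sin(kt) is an exact sinusoid. -/

import Mathlib

/-!
Subtracting the rate equations of a dual-rail pair cancels the shared annihilation term, leaving
the linear system ρ' = k a, a' = -k ρ. In the frame rotating by the angle k t the pair (ρ, a) is
constant, and rotating back gives ρ(t) = ρ(0) cos(kt) + a(0) sin(kt).
-/

open Real

theorem HasDerivAt.sub_of_common_loss {𝕜 F : Type*} [NontriviallyNormedField 𝕜]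
    [NormedAddCommGroup F] [NormedSpace 𝕜 F] {f g : 𝕜 → F} {a b c : F} {x : 𝕜}
    (hf : HasDerivAt f (a - c) x) (hg : HasDerivAt g (b - c) x) :
    HasDerivAt (fun y => f y - g y) (a - b) x :=
  (hf.sub hg).congr_deriv (sub_sub_sub_cancel_right a b c)

section HarmonicOscillator

variable {f g : ℝ → ℝ} {k : ℝ}

theorem harmonic_rotating_frame_const (hf : ∀ t, HasDerivAt f (k * g t) t)
    (hg : ∀ t, HasDerivAt g (-(k * f t)) t) (t : ℝ) :
    f t * cos (k * t) - g t * sin (k * t) = f 0 ∧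
      f t * sin (k * t) + g t * cos (k * t) = g 0 := by
  have hcos (s : ℝ) : HasDerivAt (fun u => cos (k * u)) (-sin (k * s) * (k * 1)) s :=
    ((hasDerivAt_id s).const_mul k).cos
  have hsin (s : ℝ) : HasDerivAt (fun u => sin (k * u)) (cos (k * s) * (k * 1)) s :=
    ((hasDerivAt_id s).const_mul k).sin
  have const_of_deriv_zero (F : ℝ → ℝ) (hF : ∀ s, HasDerivAt F 0 s) : F t = F 0 :=
    is_const_of_deriv_eq_zero (fun s => (hF s).differentiableAt) (fun s => (hF s).deriv) t 0
  constructor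
  · simpa using const_of_deriv_zero (fun u => f u * cos (k * u) - g u * sin (k * u)) fun s =>
      (((hf s).mul (hcos s)).sub ((hg s).mul (hsin s))).congr_deriv (by ring)
  · simpa using const_of_deriv_zero (fun u => f u * sin (k * u) + g u * cos (k * u)) fun s =>
      (((hf s).mul (hsin s)).add ((hg s).mul (hcos s))).congr_deriv (by ring)

theorem harmonic_eq_cos_add_sin (hf : ∀ t, HasDerivAt f (k * g t) t)
    (hg : ∀ t, HasDerivAt g (-(k * f t)) t) (t : ℝ) :
    f t = f 0 * cos (k * t) + g 0 * sin (k * t) := by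
  obtain ⟨hu, hv⟩ := harmonic_rotating_frame_const hf hg t
  rw [← hu, ← hv]
  linear_combination (-f t) * sin_sq_add_cos_sq (k * t)

end HarmonicOscillator

theorem sine_reference_exact_general
    (xAp xAm xRp xRm : ℝ → ℝ) (k : ℝ)
    (hRp : ∀ t, HasDerivAt xRp (k * xAp t - k * xRp t * xRm t) t)
    (hRm : ∀ t, HasDerivAt xRm (k * xAm t - k * xRp t * xRm t) t)
    (hAp : ∀ t, HasDerivAt xAp (k * xRm t - k * xAp t * xAm t) t)
    (hAm : ∀ t, HasDerivAt xAm (k * xRp t - k * xAp t * xAm t) t) :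
    (∀ t, HasDerivAt (fun u => xRp u - xRm u) (k * (xAp t - xAm t)) t) ∧
    (∀ t, HasDerivAt (fun u => xAp u - xAm u) (-(k * (xRp t - xRm t))) t) ∧
    (∀ t, xRp t - xRm t =
      (xRp 0 - xRm 0) * Real.cos (k * t) + (xAp 0 - xAm 0) * Real.sin (k * t)) := by
  have hR (t : ℝ) : HasDerivAt (fun u => xRp u - xRm u) (k * (xAp t - xAm t)) t := by
    simpa only [mul_sub] using (hRp t).sub_of_common_loss (hRm t)
  have hA (t : ℝ) : HasDerivAt (fun u => xAp u - xAm u) (-(k * (xRp t - xRm t))) t := by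
    simpa only [mul_sub, neg_sub] using (hAp t).sub_of_common_loss (hAm t)
  exact ⟨hR, hA, harmonic_eq_cos_add_sin hR hA⟩

/-- The sine-wave reference CRN: the dual-rail differences satisfy a harmonic
oscillator, so the encoded reference signal is an exact sinusoid. -/
theorem sine_reference_exact
    (xAp xAm xRp xRm : ℝ → ℝ) (k : ℝ) (hk : 0 < k)
    (hRp : ∀ t, HasDerivAt xRp (k * xAp t - k * xRp t * xRm t) t)
    (hRm : ∀ t, HasDerivAt xRm (k * xAm t - k * xRp t * xRm t) t)
    (hAp : ∀ t, HasDerivAt xAp (k * xRm t - k * xAp t * xAm t) t)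
    (hAm : ∀ t, HasDerivAt xAm (k * xRp t - k * xAp t * xAm t) t) :
    (∀ t, HasDerivAt (fun u => xRp u - xRm u) (k * (xAp t - xAm t)) t) ∧
    (∀ t, HasDerivAt (fun u => xAp u - xAm u) (-(k * (xRp t - xRm t))) t) ∧
    (∀ t, xRp t - xRm t =
      (xRp 0 - xRm 0) * Real.cos (k * t) + (xAp 0 - xAm 0) * Real.sin (k * t)) :=
  sine_reference_exact_general xAp xAm xRp xRm k hRp hRm hAp hAm
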